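/- arXiv:2603.13802 — 8 statements merged into one kernel-verified Lean document; each statement's English description precedes it below -/
import Mathlib

section
/- Kronecker's theorem: Let P be a monic polynomial with integer coefficients of degree at least 1, and suppose that every complex root z of P (i.e., every z ∈ ℂ at which the image of P under the canonical map ℤ[X] → ℂ[X] vanishes) satisfies |z| = 1. Then P is a product of cyclotomic polynomials: there exists a finitely supported function e : ℕ → ℕ with e(0) = 0 such that P = ∏_n Φ_n^{e(n)}. -/
open Polynomial IntermediateField

private lemma kron_root_prim (P : Polynomial ℤ) (hmonic : P.Monic)
    (hroots : ∀ z : ℂ, (P.map (Int.castRingHom ℂ)).eval z = 0 → ‖z‖ = 1)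
    {z : ℂ} (hz : (P.map (Int.castRingHom ℂ)).eval z = 0) :
    ∃ m : ℕ, 0 < m ∧ IsPrimitiveRoot z m := by
  have haev : (aeval z) P = 0 := by
    rwa [aeval_def, eval₂_eq_eval_map, algebraMap_int_eq]
  have hzint : IsIntegral ℤ z := ⟨P, hmonic, by
    rwa [aeval_def] at haev⟩
  have hzintQ : IsIntegral ℚ z := hzint.tower_top
  haveI : FiniteDimensional ℚ ℚ⟮z⟯ := IntermediateField.adjoin.finiteDimensional hzintQ
  haveI : NumberField ℚ⟮z⟯ := ⟨⟩
  set x : ℚ⟮z⟯ := IntermediateField.AdjoinSimple.gen ℚ z with hx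
  have hxz : algebraMap ℚ⟮z⟯ ℂ x = z := rfl
  have haevx : (aeval x) P = 0 := by
    apply (algebraMap ℚ⟮z⟯ ℂ).injective
    rw [map_zero, ← aeval_algebraMap_apply, hxz, haev]
  have hxint : IsIntegral ℤ x := ⟨P, hmonic, by rwa [aeval_def] at haevx⟩
  have hnorm : ∀ φ : ℚ⟮z⟯ →+* ℂ, ‖φ x‖ = 1 := by
    intro φ
    have hmem : φ x ∈ (minpoly ℚ x).rootSet ℂ := by
      rw [← NumberField.Embeddings.range_eval_eq_rootSet_minpoly ℚ⟮z⟯ ℂ x]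
      exact ⟨φ, rfl⟩
    have hdvd : minpoly ℚ x ∣ P.map (Int.castRingHom ℚ) := by
      apply minpoly.dvd
      rw [← algebraMap_int_eq, aeval_map_algebraMap]
      exact haevx
    have hroot : (P.map (Int.castRingHom ℂ)).eval (φ x) = 0 := by
      have h1 : ((minpoly ℚ x).map (algebraMap ℚ ℂ)).eval (φ x) = 0 := by
        have := (mem_rootSet.mp hmem).2
        rwa [aeval_def, eval₂_eq_eval_map] at this
      obtain ⟨Q, hQ⟩ := hdvd
      have : P.map (Int.castRingHom ℂ) =
          ((minpoly ℚ x).map (algebraMap ℚ ℂ)) * (Q.map (algebraMap ℚ ℂ)) := by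
        rw [← Polynomial.map_mul, ← hQ, Polynomial.map_map]
        exact congrArg (fun f : ℤ →+* ℂ => P.map f) (Subsingleton.elim _ _)
      rw [this, eval_mul, h1, zero_mul]
    exact hroots _ hroot
  obtain ⟨n, hn, hxn⟩ := NumberField.Embeddings.pow_eq_one_of_norm_eq_one ℚ⟮z⟯ ℂ hxint hnorm
  have hzn : z ^ n = 1 := by
    have := congrArg (algebraMap ℚ⟮z⟯ ℂ) hxn
    rwa [map_pow, map_one, hxz] at this
  have hfin : IsOfFinOrder z := isOfFinOrder_iff_pow_eq_one.mpr ⟨n, hn, hzn⟩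
  exact ⟨orderOf z, orderOf_pos_iff.mpr hfin, IsPrimitiveRoot.orderOf z⟩

private lemma kron_aux : ∀ (n : ℕ) (P : Polynomial ℤ), P.Monic → P.natDegree = n →
    (∀ z : ℂ, (P.map (Int.castRingHom ℂ)).eval z = 0 → ‖z‖ = 1) →
    ∃ e : ℕ →₀ ℕ, e 0 = 0 ∧ P = e.prod (fun n k => (cyclotomic n ℤ) ^ k) := by
  intro n
  induction n using Nat.strong_induction_on with
  | _ n ih =>
    intro P hmonic hdeg hroots
    rcases Nat.eq_zero_or_pos n with h0 | hpos
    · refine ⟨0, rfl, ?_⟩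
      rw [Finsupp.prod_zero_index]
      exact hmonic.natDegree_eq_zero.mp (hdeg.trans h0)
    · have hdegpos : 0 < (P.map (Int.castRingHom ℂ)).degree := by
        rw [natDegree_pos_iff_degree_pos.symm, hmonic.natDegree_map, hdeg]
        exact hpos
      obtain ⟨z, hz⟩ := Complex.exists_root hdegpos
      rw [IsRoot.def] at hz
      obtain ⟨m, hm, hprim⟩ := kron_root_prim P hmonic hroots hz
      have hdvd : cyclotomic m ℤ ∣ P := by
        rw [cyclotomic_eq_minpoly hprim hm]
        exact minpoly.isIntegrallyClosed_dvd (hprim.isIntegral hm)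
          (by rwa [aeval_def, eval₂_eq_eval_map, algebraMap_int_eq])
      obtain ⟨Q, hQ⟩ := hdvd
      have hQmonic : Q.Monic := (cyclotomic.monic m ℤ).of_mul_monic_left (hQ ▸ hmonic)
      have hdegs : m.totient + Q.natDegree = n := by
        rw [← hdeg, hQ, natDegree_mul (cyclotomic_ne_zero m ℤ) hQmonic.ne_zero,
          natDegree_cyclotomic]
      have hlt : Q.natDegree < n := by
        have := Nat.totient_pos.mpr hm
        omega
      have hQroots : ∀ z : ℂ, (Q.map (Int.castRingHom ℂ)).eval z = 0 → ‖z‖ = 1 := by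
        intro w hw
        apply hroots
        rw [hQ, Polynomial.map_mul, eval_mul, hw, mul_zero]
      obtain ⟨e, he0, heP⟩ := ih Q.natDegree hlt Q hQmonic rfl hQroots
      refine ⟨e + Finsupp.single m 1, ?_, ?_⟩
      · simp [he0, Finsupp.single_apply, hm.ne']
      · have hs : (Finsupp.single m 1).prod (fun n k => (cyclotomic n ℤ) ^ k)
            = cyclotomic m ℤ := by simp
        rw [Finsupp.prod_add_index (by intros; exact pow_zero _)
          (by intros; exact pow_add _ _ _), hs, hQ, heP, mul_comm]

theorem kronecker_cyclotomic
    (P : Polynomial ℤ) (hmonic : P.Monic) (hdeg : 1 ≤ P.natDegree)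
    (hroots : ∀ z : ℂ, (P.map (Int.castRingHom ℂ)).eval z = 0 → ‖z‖ = 1) :
    ∃ e : ℕ →₀ ℕ, e 0 = 0 ∧
      P = e.prod (fun n k => (cyclotomic n ℤ) ^ k) := by
  exact kron_aux P.natDegree P hmonic rfl hroots
end

section
/- Let P be a monic polynomial with integer coefficients of degree at least 1 such that every complex root z of P satisfies |z| = 1. Then every complex root of P is a root of unity: for each such z there exists an integer k ≥ 1 with z^k = 1. -/
open Polynomial

theorem roots_abs_one_are_roots_of_unity
    (P : Polynomial ℤ) (hmonic : P.Monic) (hdeg : 1 ≤ P.natDegree)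
    (hroots : ∀ z : ℂ, (P.map (Int.castRingHom ℂ)).eval z = 0 → ‖z‖ = 1) :
    ∀ z : ℂ, (P.map (Int.castRingHom ℂ)).eval z = 0 → ∃ k : ℕ, 1 ≤ k ∧ z ^ k = 1 := by
  intro z hz
  have hz' : eval₂ (Int.castRingHom ℂ) z P = 0 := by rwa [← eval_map]
  have hint : IsIntegral ℤ z := ⟨P, hmonic, hz'⟩
  have hintQ : IsIntegral ℚ z := hint.tower_top
  let K := IntermediateField.adjoin ℚ ({z} : Set ℂ)
  haveI : FiniteDimensional ℚ K :=
    IntermediateField.adjoin.finiteDimensional hintQ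
  haveI : NumberField K := ⟨⟩
  set x : K := IntermediateField.AdjoinSimple.gen ℚ z with hx
  have hxz : (algebraMap K ℂ) x = z := rfl
  have hxi : IsIntegral ℤ x := by
    rw [← isIntegral_algebraMap_iff (R := ℤ) (B := ℂ) (algebraMap K ℂ).injective, hxz]
    exact hint
  have hPx : eval₂ (Int.castRingHom K) x P = 0 := by
    have : (algebraMap K ℂ) (eval₂ (Int.castRingHom K) x P) = 0 := by
      rw [hom_eval₂, hxz, RingHom.ext_int ((algebraMap K ℂ).comp (Int.castRingHom K)) (Int.castRingHom ℂ), hz']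
    exact (map_eq_zero_iff _ (algebraMap K ℂ).injective).mp this
  have hnorm : ∀ φ : K →+* ℂ, ‖φ x‖ = 1 := by
    intro φ
    have : (P.map (Int.castRingHom ℂ)).eval (φ x) = 0 := by
      rw [eval_map, RingHom.ext_int (Int.castRingHom ℂ) (φ.comp (Int.castRingHom K)),
        ← hom_eval₂, hPx, map_zero]
    simpa using hroots _ this
  obtain ⟨n, hn, hxn⟩ :=
    NumberField.Embeddings.pow_eq_one_of_norm_eq_one K ℂ hxi hnorm
  refine ⟨n, hn, ?_⟩
  have := congrArg (algebraMap K ℂ) hxn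
  rwa [map_pow, hxz, map_one] at this
end

section
/- Unitarization of a Weil-type polynomial: Let q ≥ 2 be a natural number and let P = ∑_{i=0}^{r} c_i X^i be an integer polynomial of degree r ≥ 1 with c_0 = 1, such that q^i divides c_i for all 0 ≤ i ≤ r, and such that every complex root of P has modulus 1/q. Then the integer polynomial Q = ∑_{i=0}^{r} (c_i / q^i) X^{r-i} is monic of degree r, every complex root of Q has modulus 1, and Q is a product of cyclotomic polynomials Φ_n. -/
open Polynomial IntermediateField


lemma aevalQ_eq (Q : Polynomial ℤ) (w : ℂ) :
    aeval w (Q.map (Int.castRingHom ℚ)) = (Q.map (Int.castRingHom ℂ)).eval w := by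
  rw [aeval_def, eval₂_map, eval_map]
  congr 1

lemma exists_primroot (Q : Polynomial ℤ) (hm : Q.Monic)
    (h1 : ∀ z : ℂ, (Q.map (Int.castRingHom ℂ)).eval z = 0 → ‖z‖ = 1)
    (z : ℂ) (hz : (Q.map (Int.castRingHom ℂ)).eval z = 0) :
    ∃ m : ℕ, 0 < m ∧ IsPrimitiveRoot z m := by
  have hzint : IsIntegral ℤ z := ⟨Q, hm, by rw [← eval_map]; exact hz⟩
  have hzintQ : IsIntegral ℚ z := hzint.tower_top
  haveI : FiniteDimensional ℚ ℚ⟮z⟯ := IntermediateField.adjoin.finiteDimensional hzintQ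
  set K := ℚ⟮z⟯
  haveI : NumberField K := ⟨⟩
  set x : K := IntermediateField.AdjoinSimple.gen ℚ z with hx
  have hmapx : algebraMap K ℂ x = z := IntermediateField.AdjoinSimple.algebraMap_gen ℚ z
  have hinj : Function.Injective (algebraMap K ℂ) := (algebraMap K ℂ).injective
  have hxint : IsIntegral ℤ x := by
    rw [← isIntegral_algebraMap_iff hinj, hmapx]; exact hzint
  have haevx : aeval x (Q.map (Int.castRingHom ℚ)) = 0 := by
    apply hinj
    rw [map_zero, ← Polynomial.aeval_algebraMap_apply, hmapx, aevalQ_eq]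
    exact hz
  have hdvd : minpoly ℚ x ∣ Q.map (Int.castRingHom ℚ) := minpoly.dvd ℚ x haevx
  have hnorm : ∀ φ : K →+* ℂ, ‖φ x‖ = 1 := by
    intro φ
    have hmem : φ x ∈ (minpoly ℚ x).rootSet ℂ := by
      rw [← NumberField.Embeddings.range_eval_eq_rootSet_minpoly K ℂ x]
      exact ⟨φ, rfl⟩
    have hroot : aeval (φ x) (Q.map (Int.castRingHom ℚ)) = 0 := by
      obtain ⟨c, hc⟩ := hdvd
      rw [hc, map_mul, (mem_rootSet.mp hmem).2, zero_mul]
    rw [aevalQ_eq] at hroot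
    exact h1 _ hroot
  obtain ⟨n, hn, hxn⟩ := NumberField.Embeddings.pow_eq_one_of_norm_eq_one K ℂ hxint hnorm
  have hzn : z ^ n = 1 := by
    rw [← hmapx, ← map_pow, hxn, map_one]
  have hfin : IsOfFinOrder z := isOfFinOrder_iff_pow_eq_one.mpr ⟨n, hn, hzn⟩
  exact ⟨orderOf z, hfin.orderOf_pos, IsPrimitiveRoot.orderOf z⟩


lemma kron (n : ℕ) : ∀ Q : Polynomial ℤ, Q.natDegree = n → Q.Monic →
    (∀ z : ℂ, (Q.map (Int.castRingHom ℂ)).eval z = 0 → ‖z‖ = 1) →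
    ∃ e : ℕ →₀ ℕ, e 0 = 0 ∧ Q = e.prod (fun n k => (cyclotomic n ℤ) ^ k) := by
  induction n using Nat.strong_induction_on with
  | _ n ih =>
    intro Q hdeg hm h1
    rcases Nat.eq_zero_or_pos n with h0 | hpos
    · refine ⟨0, rfl, ?_⟩
      rw [Finsupp.prod_zero_index]
      exact hm.natDegree_eq_zero.mp (hdeg.trans h0)
    · -- find a complex root
      have hQmonic : (Q.map (Int.castRingHom ℂ)).Monic := hm.map _
      have hdegpos : 0 < (Q.map (Int.castRingHom ℂ)).degree := by
        rw [natDegree_pos_iff_degree_pos.symm, hm.natDegree_map, hdeg]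
        exact hpos
      obtain ⟨z, hz⟩ := Complex.exists_root hdegpos
      rw [IsRoot] at hz
      obtain ⟨m, hmpos, hprim⟩ := exists_primroot Q hm h1 z hz
      have hmin : cyclotomic m ℚ = minpoly ℚ z := cyclotomic_eq_minpoly_rat hprim hmpos
      have hdvdQ : cyclotomic m ℤ ∣ Q := by
        rw [← map_dvd_map (Int.castRingHom ℚ) Int.cast_injective (cyclotomic.monic m ℤ),
          map_cyclotomic, hmin]
        exact minpoly.dvd ℚ z (by rw [aevalQ_eq]; exact hz)
      obtain ⟨Q', hQ'⟩ := hdvdQ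
      have hcm : (cyclotomic m ℤ).Monic := cyclotomic.monic m ℤ
      have hm' : Q'.Monic := hcm.of_mul_monic_left (hQ' ▸ hm)
      have hdeg' : Q'.natDegree = n - m.totient := by
        have := natDegree_mul hcm.ne_zero hm'.ne_zero
        rw [← hQ', hdeg, natDegree_cyclotomic] at this
        omega
      have htot : 0 < m.totient := Nat.totient_pos.mpr hmpos
      have hlt : n - m.totient < n := by
        have := natDegree_mul hcm.ne_zero hm'.ne_zero
        rw [← hQ', hdeg, natDegree_cyclotomic] at this
        omega
      have h1' : ∀ w : ℂ, (Q'.map (Int.castRingHom ℂ)).eval w = 0 → ‖w‖ = 1 := by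
        intro w hw
        apply h1
        rw [hQ', Polynomial.map_mul, eval_mul, hw, mul_zero]
      obtain ⟨e', he'0, he'⟩ := ih _ hlt Q' hdeg' hm' h1'
      refine ⟨e' + Finsupp.single m 1, ?_, ?_⟩
      · simp [he'0, Finsupp.single_apply, hmpos.ne']
      · rw [Finsupp.prod_add_index (by intros; simp) (by intros; rw [pow_add]),
          Finsupp.prod_single_index (by simp), ← he', pow_one, hQ', mul_comm]


theorem unitarization_weil_polynomial
    (q : ℕ) (hq : 2 ≤ q)
    (P : Polynomial ℤ) (r : ℕ) (hr : 1 ≤ r) (hdeg : P.natDegree = r)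
    (hc0 : P.coeff 0 = 1)
    (hdvd : ∀ i, i ≤ r → (q : ℤ) ^ i ∣ P.coeff i)
    (hroots : ∀ z : ℂ, (P.map (Int.castRingHom ℂ)).eval z = 0 →
      ‖z‖ = 1 / q)
    (Q : Polynomial ℤ)
    (hQ : Q = ∑ i ∈ Finset.range (r + 1),
      C (P.coeff i / (q : ℤ) ^ i) * X ^ (r - i)) :
    Q.Monic ∧ Q.natDegree = r ∧
    (∀ z : ℂ, (Q.map (Int.castRingHom ℂ)).eval z = 0 → ‖z‖ = 1) ∧
    ∃ e : ℕ →₀ ℕ, e 0 = 0 ∧ Q = e.prod (fun n k => (cyclotomic n ℤ) ^ k) := by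
  have hq0 : (q : ℤ) ≠ 0 := by positivity
  have hP0 : P ≠ 0 := fun h => by simp [h] at hdeg; omega
  -- coefficient at r
  have hQr : Q.coeff r = 1 := by
    rw [hQ, finset_sum_coeff, Finset.sum_eq_single 0]
    · simp [hc0]
    · intro i hi hi0
      have hir : i ≤ r := by simpa using Nat.lt_succ_iff.mp (Finset.mem_range.mp hi)
      have : r - i ≠ r := by omega
      simp only [coeff_C_mul, coeff_X_pow]
      rw [if_neg (fun h => this h.symm)]
      simp
    · simp
  have hQle : Q.natDegree ≤ r := by
    rw [hQ]
    apply natDegree_sum_le_of_forall_le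
    intro i hi
    apply (natDegree_C_mul_le _ _).trans
    simp [natDegree_X_pow]
  have hmonic : Q.Monic := monic_of_natDegree_le_of_coeff_eq_one r hQle hQr
  have hQdeg : Q.natDegree = r :=
    le_antisymm hQle (le_natDegree_of_ne_zero (by rw [hQr]; exact one_ne_zero))
  -- roots
  have hcr : P.coeff r ≠ 0 := by
    rw [← hdeg]; exact leadingCoeff_ne_zero.mpr hP0
  have habs : ∀ z : ℂ, (Q.map (Int.castRingHom ℂ)).eval z = 0 → ‖z‖ = 1 := by
    intro z hz
    -- Q eval z as a sum
    have heval : (Q.map (Int.castRingHom ℂ)).eval z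
        = ∑ i ∈ Finset.range (r + 1), ((P.coeff i / (q : ℤ) ^ i : ℤ) : ℂ) * z ^ (r - i) := by
      simp [hQ, Polynomial.map_sum, eval_finset_sum]
    -- z ≠ 0
    have hz0 : z ≠ 0 := by
      rintro rfl
      rw [heval, Finset.sum_eq_single r (by
          intro i hi hir
          have : i ≤ r := Nat.lt_succ_iff.mp (Finset.mem_range.mp hi)
          have : 0 < r - i := by omega
          simp [zero_pow this.ne']) (by simp)] at hz
      simp at hz
      obtain ⟨d, hd⟩ := hdvd r le_rfl
      rw [hd, Int.mul_ediv_cancel_left _ (pow_ne_zero _ hq0)] at hz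
      exact hcr (by rw [hd, hz, mul_zero])
    set u : ℂ := ((q : ℂ) * z)⁻¹ with hu
    have hqC : (q : ℂ) ≠ 0 := by exact_mod_cast (by positivity : (q:ℝ) ≠ 0)
    have hPu : (P.map (Int.castRingHom ℂ)).eval u = 0 := by
      have hPsum : (P.map (Int.castRingHom ℂ)).eval u
          = ∑ i ∈ Finset.range (r + 1), ((P.coeff i : ℂ)) * u ^ i := by
        rw [eval_map, eval₂_eq_sum_range, hdeg]
        rfl
      have key : (Q.map (Int.castRingHom ℂ)).eval z
          = z ^ r * (P.map (Int.castRingHom ℂ)).eval u := by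
        rw [heval, hPsum, Finset.mul_sum]
        apply Finset.sum_congr rfl
        intro i hi
        have hir : i ≤ r := Nat.lt_succ_iff.mp (Finset.mem_range.mp hi)
        rw [Int.cast_div_charZero (hdvd i hir)]
        rw [hu, mul_inv, mul_pow, inv_pow, inv_pow]
        rw [pow_sub₀ z hz0 hir]
        push_cast
        field_simp
      have := hz
      rw [key, mul_eq_zero] at this
      exact this.resolve_left (pow_ne_zero _ hz0)
    have := hroots u hPu
    rw [hu, norm_inv, norm_mul, Complex.norm_natCast] at this
    have hzabs : ‖z‖ ≠ 0 := by simpa using hz0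
    have hqR : (q : ℝ) ≠ 0 := by positivity
    field_simp at this
    -- this : q * abs z = q  or similar
    nlinarith [this, norm_nonneg z]
  exact ⟨hmonic, hQdeg, habs, kron r Q hQdeg hmonic habs⟩
end

section
/- Discriminant factor degree constraint: Let F be a finite field in which 27 ≠ 0, and suppose that the element -4/27 of F is not a square in F. Then for every polynomial D ∈ F[t], every irreducible factor f of the polynomial 4 + 27·D(t)² over F has even degree. -/
open Polynomial

theorem discriminant_factor_even_degree
    (F : Type*) [Field F] [Fintype F]
    (h27 : (27 : F) ≠ 0)
    (hns : ¬ IsSquare ((-4 : F) / 27))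
    (D : Polynomial F) (f : Polynomial F)
    (hf_irr : Irreducible f)
    (hf_dvd : f ∣ (C 4 + C 27 * D ^ 2)) :
    Even f.natDegree := by
  by_contra hodd
  rw [Nat.not_even_iff_odd] at hodd
  set a : F := (-4 : F) / 27 with ha_def
  -- char ≠ 2
  have h2 : (2 : F) ≠ 0 := by
    intro h2
    apply hns
    have h4 : (-4 : F) = 0 := by linear_combination (-2 : F) * h2
    exact ⟨0, by rw [ha_def, h4, zero_div, mul_zero]⟩
  have ha : a ≠ 0 := by
    rw [ha_def]
    apply div_ne_zero _ h27
    intro h4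
    apply h2
    have : (2 : F) * 2 = 0 := by linear_combination -h4
    rcases mul_eq_zero.mp this with h | h <;> exact h
  haveI := Fact.mk hf_irr
  set K := AdjoinRoot f with hK
  haveI : Module.Finite F K := (AdjoinRoot.powerBasis hf_irr.ne_zero).finite
  have hrank : Module.finrank F K = f.natDegree := by
    rw [(AdjoinRoot.powerBasis hf_irr.ne_zero).finrank, AdjoinRoot.powerBasis_dim]
  set d : K := AdjoinRoot.mk f D with hd
  have h0 : (AdjoinRoot.mk f) (C 4 + C 27 * D ^ 2) = 0 :=
    (AdjoinRoot.mk_eq_zero).mpr hf_dvd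
  have h0' : algebraMap F K 4 + algebraMap F K 27 * d ^ 2 = 0 := by
    rw [AdjoinRoot.algebraMap_eq]
    simpa using h0
  have hdsq : d ^ 2 = algebraMap F K a := by
    have h27K : algebraMap F K 27 ≠ 0 := by
      simpa using (algebraMap F K).injective.ne h27
    rw [ha_def, map_div₀, map_neg]
    rw [eq_div_iff h27K]
    linear_combination h0'
  set N : F := Algebra.norm F d with hN
  have hNsq : N ^ 2 = a ^ f.natDegree := by
    rw [hN, ← map_pow, hdsq, Algebra.norm_algebraMap, hrank]
  obtain ⟨m, hm⟩ := hodd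
  apply hns
  refine ⟨N / a ^ m, ?_⟩
  rw [← pow_two]
  have hpow : a ^ m ≠ 0 := pow_ne_zero _ ha
  field_simp
  rw [hNsq, hm]
  ring
end

section
/- Let F be a finite field and let a ∈ F be a nonsquare in F. Then for every polynomial D ∈ F[t], every irreducible factor f of the polynomial D(t)² - a over F has even degree. -/
open Polynomial

theorem nonsquare_factor_even_degree
    (F : Type*) [Field F] [Fintype F]
    (a : F) (hns : ¬ IsSquare a)
    (D : Polynomial F) (f : Polynomial F)
    (hf_irr : Irreducible f)
    (hf_dvd : f ∣ (D ^ 2 - C a)) :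
    Even f.natDegree := by
  have ha : a ≠ 0 := by rintro rfl; exact hns (by simp)
  haveI : Fact (Irreducible f) := ⟨hf_irr⟩
  have hf0 : f ≠ 0 := hf_irr.ne_zero
  let K := AdjoinRoot f
  let pb : PowerBasis F K := AdjoinRoot.powerBasis hf0
  haveI : FiniteDimensional F K := pb.finite
  have hdim : Module.finrank F K = f.natDegree := by
    rw [pb.finrank]; rfl
  set x : K := AdjoinRoot.mk f D with hx
  have hsq : x ^ 2 = algebraMap F K a := by
    have h0 : AdjoinRoot.mk f (D ^ 2 - C a) = 0 :=
      (AdjoinRoot.mk_eq_zero).mpr hf_dvd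
    have : AdjoinRoot.mk f (D ^ 2) - AdjoinRoot.mk f (C a) = 0 := by
      rw [← map_sub]; exact h0
    have h1 : AdjoinRoot.mk f (D ^ 2) = AdjoinRoot.mk f (C a) := by
      linear_combination this
    simp only [map_pow, AdjoinRoot.mk_C] at h1; exact h1
  have hnorm : (Algebra.norm F x) ^ 2 = a ^ f.natDegree := by
    have := congrArg (Algebra.norm F) hsq
    rwa [map_pow, Algebra.norm_algebraMap, hdim] at this
  by_contra hodd
  rw [Nat.not_even_iff_odd] at hodd
  obtain ⟨k, hk⟩ := hodd
  apply hns
  refine ⟨Algebra.norm F x / a ^ k, ?_⟩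
  have hak : (a : F) ^ k ≠ 0 := pow_ne_zero _ ha
  field_simp [← sq, mul_comm]
  rw [hnorm, hk]
  ring
end

section
/- Let F be a finite field and let D ∈ F[t] be monic of degree 5. Then the cubic equation x³ + x + D = 0 has no solution x in the rational function field F(t): there is no x ∈ RatFunc F with x³ + x + ι(D) = 0, where ι : F[t] → RatFunc F is the canonical embedding. -/
/-!
A root `x ∈ F(t)` of `X³ + X + D` is integral over the integrally closed ring `F[t]`, hence is a
polynomial `p`. Then `p³ + p = -D`, but `p³ + p` has degree `3 · deg p`, which is never `5`.
-/

open Polynomial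

theorem isIntegral_of_pow_add_self_add_algebraMap_eq_zero {R K : Type*} [CommRing R] [CommRing K]
    [Algebra R K] {n : ℕ} (hn : 2 ≤ n) {d : R} {x : K}
    (hx : x ^ n + x + algebraMap R K d = 0) : IsIntegral R x := by
  refine ⟨X ^ n + X + C d, ?_, by simpa using hx⟩
  rw [add_assoc]
  refine monic_X_pow_add ((degree_add_le _ _).trans_lt (max_lt ?_ ?_))
  · exact degree_X_le.trans_lt (by exact_mod_cast hn)
  · exact degree_C_le.trans_lt (by exact_mod_cast (by omega : 0 < n))

theorem natDegree_pow_add_self {R : Type*} [Semiring R] [NoZeroDivisors R] {n : ℕ} (hn : 2 ≤ n)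
    (p : R[X]) : (p ^ n + p).natDegree = n * p.natDegree := by
  nontriviality R
  rcases eq_or_ne p.natDegree 0 with hp | hp
  · rw [hp, mul_zero, eq_C_of_natDegree_eq_zero hp, ← C_pow, ← C_add, natDegree_C]
  have hlt : p.degree < (p ^ n).degree := by
    rw [degree_pow, degree_eq_natDegree (ne_zero_of_natDegree_gt (Nat.pos_of_ne_zero hp)),
      nsmul_eq_mul]
    exact_mod_cast (by nlinarith [Nat.pos_of_ne_zero hp] : p.natDegree < n * p.natDegree)
  rw [natDegree_eq_of_degree_eq (degree_add_eq_left_of_degree_lt hlt), natDegree_pow]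

theorem no_ratfunc_cubic_solution_general
    (F : Type*) [Field F]
    (D : Polynomial F) (hdeg : D.natDegree = 5) :
    ¬ ∃ x : RatFunc F,
      x ^ 3 + x + algebraMap (Polynomial F) (RatFunc F) D = 0 := by
  rintro ⟨x, hx⟩
  obtain ⟨p, rfl⟩ := IsIntegrallyClosed.isIntegral_iff.mp
    (isIntegral_of_pow_add_self_add_algebraMap_eq_zero (by norm_num) hx)
  have hp : p ^ 3 + p + D = 0 :=
    IsFractionRing.injective (Polynomial F) (RatFunc F) (by simpa using hx)
  have hdeg_cubic := natDegree_pow_add_self (by norm_num : 2 ≤ 3) p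
  rw [eq_neg_of_add_eq_zero_left hp, natDegree_neg, hdeg] at hdeg_cubic
  omega

theorem no_ratfunc_cubic_solution
    (F : Type*) [Field F] [Fintype F]
    (D : Polynomial F) (hmonic : D.Monic) (hdeg : D.natDegree = 5) :
    ¬ ∃ x : RatFunc F,
      x ^ 3 + x + algebraMap (Polynomial F) (RatFunc F) D = 0 :=
  no_ratfunc_cubic_solution_general F D hdeg
end

section
/- Triviality of 2-torsion in the family E_D: Let F be a finite field of characteristic different from 2 and 3, let K = RatFunc F, let D ∈ F[t] be monic of degree 5, and let W be the Weierstrass curve over K given by y² = x³ + x + ι(D) (coefficients a₁ = a₂ = a₃ = 0, a₄ = 1, a₆ = ι(D), where ι : F[t] → K is the canonical embedding). Then the group of affine points of W over K has no element of order 2: every point P with P + P = 0 satisfies P = 0. -/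
open Polynomial

open Classical in
theorem no_two_torsion_family
    (F : Type*) [Field F] [Fintype F]
    (h2 : (2 : F) ≠ 0) (h3 : (3 : F) ≠ 0)
    (D : Polynomial F) (hmonic : D.Monic) (hdeg : D.natDegree = 5)
    (W : WeierstrassCurve (RatFunc F))
    (hW : W = { a₁ := 0, a₂ := 0, a₃ := 0, a₄ := 1,
                a₆ := algebraMap (Polynomial F) (RatFunc F) D }) :
    ∀ P : W.toAffine.Point, P + P = 0 → P = 0 := by
  intro P hP
  have hPneg : -P = P := neg_eq_of_add_eq_zero_left hP
  cases P with
  | zero => rfl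
  | some x y h =>
    exfalso
    rw [WeierstrassCurve.Affine.Point.neg_some] at hPneg
    have hy : W.toAffine.negY x y = y := by
      injection hPneg
    -- negY = -y - a₁x - a₃ = -y
    have ha1 : W.a₁ = 0 := by rw [hW]
    have ha3 : W.a₃ = 0 := by rw [hW]
    have hy0 : y = 0 := by
      have h2K : (2 : RatFunc F) ≠ 0 := by
        intro hc
        have : (algebraMap F (RatFunc F)) 2 = 0 := by rw [map_ofNat]; exact hc
        exact h2 ((_root_.map_eq_zero _).mp this)
      have : -y - W.a₁ * x - W.a₃ = y := hy
      rw [ha1, ha3] at this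
      have : 2 * y = 0 := by linear_combination -this
      rcases mul_eq_zero.mp this with h | h
      · exact absurd h h2K
      · exact h
    have heq := h.1
    rw [WeierstrassCurve.Affine.equation_iff, hW] at heq
    simp only [hy0] at heq
    -- heq : 0 = x³ + 0*x² + 1*x + ι D  (roughly)
    have hroot : x ^ 3 + x + algebraMap (Polynomial F) (RatFunc F) D = 0 := by
      linear_combination -heq
    -- x is integral over F[X]
    have hint : IsIntegral (Polynomial F) x := by
      refine ⟨X ^ 3 + X + C D, ?_, ?_⟩
      · rw [add_assoc]
        apply Polynomial.monic_X_pow_add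
        apply lt_of_le_of_lt (degree_add_le _ _)
        rw [degree_X]
        exact max_lt (by decide) (lt_of_le_of_lt degree_C_le (by decide))
      · simp only [eval₂_add, eval₂_pow, eval₂_X, eval₂_C]
        exact hroot
    obtain ⟨p, hp⟩ := IsIntegrallyClosed.isIntegral_iff.mp hint
    have hinj : Function.Injective (algebraMap (Polynomial F) (RatFunc F)) :=
      IsFractionRing.injective _ _
    have hpoly : p ^ 3 + p + D = 0 := by
      apply hinj
      rw [map_zero, map_add, map_add, map_pow, hp]
      exact hroot
    -- degree contradiction
    have hD0 : D ≠ 0 := hmonic.ne_zero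
    have hp0 : p ≠ 0 := by
      rintro rfl
      simp at hpoly
      exact hD0 hpoly
    have hsum : p ^ 3 + p = -D := by linear_combination hpoly
    have hdegsum : (p ^ 3 + p).natDegree = 5 := by
      rw [hsum, natDegree_neg, hdeg]
    have hd3 : (p ^ 3).natDegree = 3 * p.natDegree := natDegree_pow p 3
    rcases le_or_gt p.natDegree 1 with hle | hlt
    · have : (p ^ 3 + p).natDegree ≤ 3 := by
        apply (natDegree_add_le _ _).trans
        apply max_le
        · omega
        · omega
      omega
    · have hlt' : p.natDegree < (p ^ 3).natDegree := by omega
      have := natDegree_add_eq_left_of_natDegree_lt hlt'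
      omega
end

section
/- Nonnegativity at 1: Let P be a monic polynomial with real coefficients such that every complex root z of P satisfies |z| = 1. Then P(1) ≥ 0. -/
open Polynomial

theorem eval_one_nonneg_of_roots_on_circle
    (P : Polynomial ℝ) (hmonic : P.Monic)
    (hroots : ∀ z : ℂ, (P.map (Complex.ofRealHom : ℝ →+* ℂ)).eval z = 0 →
      ‖z‖ = 1) :
    0 ≤ P.eval 1 := by
  by_contra h
  push_neg at h
  by_cases hd : P.degree ≤ 0
  · obtain ⟨a, rfl⟩ : ∃ a, P = C a := ⟨P.coeff 0, Polynomial.eq_C_of_degree_le_zero hd⟩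
    have : a = 1 := by simpa [Polynomial.Monic, leadingCoeff] using hmonic
    simp [this] at h
    linarith
  · push_neg at hd
    have htend := Polynomial.tendsto_atTop_of_leadingCoeff_nonneg P hd
      (by simp [hmonic.leadingCoeff])
    have hev : ∀ᶠ x in Filter.atTop, 0 < P.eval x ∧ 1 < x :=
      (htend.eventually_gt_atTop 0).and (Filter.eventually_gt_atTop 1)
    obtain ⟨x, hx0, hx1⟩ := hev.exists
    have h0 : (0 : ℝ) ∈ Set.Ioo (P.eval 1) (P.eval x) := ⟨h, hx0⟩
    obtain ⟨c, hc, hceval⟩ := intermediate_value_Ioo hx1.le P.continuousOn h0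
    have hz : (P.map (Complex.ofRealHom : ℝ →+* ℂ)).eval (c : ℂ) = 0 := by
      rw [Polynomial.eval_map, show ((c : ℂ)) = Complex.ofRealHom c from rfl,
        Polynomial.eval₂_hom, show P.eval c = 0 from hceval, map_zero]
    have habs := hroots c hz
    rw [Complex.norm_real, Real.norm_eq_abs, abs_of_pos (lt_trans one_pos hc.1)] at habs
    linarith [hc.1]
end
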